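/- Let α ∈ (0, 1) ∪ (1, ∞) and let U, V be positive definite Hermitian matrices in ℂ^{d×d} with Tr[V] = 1. Then d_T( V^{1−α}, (U / Tr[U])^{1−α} ) ≤ 2 · d_T( V^{1−α}, U^{1−α} ). -/

import Mathlib

open scoped ComplexOrder
open Matrix

noncomputable section

/-- Real power of a matrix via the functional calculus (spectral decomposition);
junk value `A` if `A` is not Hermitian. -/
noncomputable def mpow {d : ℕ} (A : Matrix (Fin d) (Fin d) ℂ) (r : ℝ) :
    Matrix (Fin d) (Fin d) ℂ :=
  if hA : A.IsHermitian then
    (hA.eigenvectorUnitary : Matrix (Fin d) (Fin d) ℂ) *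
      Matrix.diagonal (fun i => ((hA.eigenvalues i ^ r : ℝ) : ℂ)) *
      star (hA.eigenvectorUnitary : Matrix (Fin d) (Fin d) ℂ)
  else A

/-- The Loewner order: `A ⪯ B` iff `B - A` is positive semidefinite. -/
def loewnerLE {d : ℕ} (A B : Matrix (Fin d) (Fin d) ℂ) : Prop := (B - A).PosSemidef

/-- Thompson metric on positive definite matrices (extended-real valued):
`inf { r ≥ 0 | exp (-r) • V ⪯ U ⪯ exp r • V }`, equal to `⊤` if no such `r` exists. -/
noncomputable def dTmat {d : ℕ} (V U : Matrix (Fin d) (Fin d) ℂ) : EReal :=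
  sInf {x : EReal | ∃ r : ℝ, 0 ≤ r ∧ x = (r : EReal) ∧
    loewnerLE (Real.exp (-r) • V) U ∧ loewnerLE U (Real.exp r • V)}

open Classical in
/-- Thompson metric on entrywise-positive vectors (extended-real valued):
`max_i |log (v i / u i)|`. -/
noncomputable def dTvec {d : ℕ} (v u : Fin d → ℝ) : EReal :=
  (⨆ i, if 0 < v i ∧ 0 < u i then ((|Real.log (v i / u i)| : ℝ) : EReal) else (⊤ : EReal)) ⊔ 0

/-- A density matrix: Hermitian positive semidefinite with unit trace. -/
def IsDensityMatrix {d : ℕ} (A : Matrix (Fin d) (Fin d) ℂ) : Prop :=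
  A.PosSemidef ∧ A.trace = 1

/-- The operator `T_F (U) = (∑ j, w j • A j ^ α / Tr[A j ^ α * U]) ^ ((1 - α)/α)`. -/
noncomputable def TF {n d : ℕ} (w : Fin n → ℝ) (A : Fin n → Matrix (Fin d) (Fin d) ℂ)
    (α : ℝ) (U : Matrix (Fin d) (Fin d) ℂ) : Matrix (Fin d) (Fin d) ℂ :=
  mpow (∑ j, ((w j : ℂ) / Matrix.trace (mpow (A j) α * U)) • mpow (A j) α) ((1 - α) / α)

/-- The Petz–Rényi divergence of order `α` (real-valued version, intended for
positive definite `Q`): `(α - 1)⁻¹ * log Tr[A^α * Q^(1-α)]`. -/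
noncomputable def petzRenyi {d : ℕ} (α : ℝ) (A Q : Matrix (Fin d) (Fin d) ℂ) : ℝ :=
  (α - 1)⁻¹ * Real.log (Matrix.trace (mpow A α * mpow Q (1 - α))).re

open Classical in
/-- The Petz–Rényi divergence of order `α`, extended-real valued; `⊤` whenever the
defining formula is not well-defined. -/
noncomputable def petzRenyiE {d : ℕ} (α : ℝ) (A Q : Matrix (Fin d) (Fin d) ℂ) : EReal :=
  if 0 < (Matrix.trace (mpow A α * mpow Q (1 - α))).re ∧
      (1 < α → ∀ x : Fin d → ℂ, Q.mulVec x = 0 → A.mulVec x = 0) then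
    (((α - 1)⁻¹ * Real.log (Matrix.trace (mpow A α * mpow Q (1 - α))).re : ℝ) : EReal)
  else ⊤

/-- The objective `F(Q) = ∑ j, w j * D_α(A j ‖ Q)`, extended-real valued. -/
noncomputable def FE {n d : ℕ} (w : Fin n → ℝ) (A : Fin n → Matrix (Fin d) (Fin d) ℂ)
    (α : ℝ) (Q : Matrix (Fin d) (Fin d) ℂ) : EReal :=
  ∑ j, ((w j : ℝ) : EReal) * petzRenyiE α (A j) Q

/-- Membership in the probability simplex `Δ_d`. -/
def memSimplex {d : ℕ} (q : Fin d → ℝ) : Prop := (∀ i, 0 ≤ q i) ∧ ∑ i, q i = 1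

/-- The classical operator `T_f (u) = (∑ j, w j • a j ^ α / ⟨a j ^ α, u⟩) ^ ((1 - α)/α)`,
entrywise. -/
noncomputable def Tf {n d : ℕ} (w : Fin n → ℝ) (a : Fin n → Fin d → ℝ) (α : ℝ)
    (u : Fin d → ℝ) : Fin d → ℝ :=
  fun i => (∑ j, w j * (a j i ^ α) / (∑ k, (a j k ^ α) * u k)) ^ ((1 - α) / α)

open Classical in
/-- The classical Rényi divergence term, extended-real valued; `⊤` whenever the
defining formula is not well-defined. -/
noncomputable def petzVecE {d : ℕ} (α : ℝ) (a q : Fin d → ℝ) : EReal :=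
  if 0 < (∑ i, a i ^ α * q i ^ (1 - α)) ∧ (1 < α → ∀ i, q i = 0 → a i = 0) then
    (((α - 1)⁻¹ * Real.log (∑ i, a i ^ α * q i ^ (1 - α)) : ℝ) : EReal)
  else ⊤

/-- The classical objective `f(q) = ∑ j, w j * (α-1)⁻¹ * log (∑ i, (a j i)^α * (q i)^(1-α))`,
real-valued version (intended for entrywise positive `q`). -/
noncomputable def fcl {n d : ℕ} (w : Fin n → ℝ) (a : Fin n → Fin d → ℝ) (α : ℝ)
    (q : Fin d → ℝ) : ℝ :=
  ∑ j, w j * ((α - 1)⁻¹ * Real.log (∑ i, a j i ^ α * q i ^ (1 - α)))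

/-- Total CES demand in a Fisher market at prices `p`. -/
noncomputable def demand {n d : ℕ} (w : Fin n → ℝ) (a : Fin n → Fin d → ℝ)
    (ρ : Fin n → ℝ) (p : Fin d → ℝ) : Fin d → ℝ :=
  fun i => ∑ j, w j * (a j i ^ (1 / (1 - ρ j)) * p i ^ (-(1 / (1 - ρ j)))) /
    (∑ k, a j k ^ (1 / (1 - ρ j)) * p k ^ (-(ρ j / (1 - ρ j))))

/-!
Write `β = 1 - α`, so that `β ∈ (0, 1)` or `β < 0`, and `s = Tr U`. Normalizing replaces `U^β`
by `s^(-β) • U^β`, which is at Thompson distance `|β log s|` from `U^β`; by the triangle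
inequality it suffices to show `|β log s| ≤ r` whenever `e^(-r) V^β ⪯ U^β ⪯ e^r V^β`.
Test the Loewner inequality on a unit eigenvector `x` of `U` with eigenvalue `λ`: for
`β ∈ (0, 1)`, `λ^β = ⟨x, U^β x⟩ ≤ e^r ⟨x, V^β x⟩ ≤ e^r ⟨x, V x⟩^β`, the last step being Jensen's
inequality for the concave `t ↦ t^β` and the spectral distribution of `V` in the state `x`; for
`β < 0` the same chain runs backwards with the convex `t ↦ t^β`. Either way
`λ ≤ e^(r/|β|) ⟨x, V x⟩`, and summing over an eigenbasis of `U` gives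
`Tr U ≤ e^(r/|β|) Tr V = e^(r/|β|)`. Exchanging `U` and `V` gives the lower bound.
-/

lemma Real.convexOn_rpow_of_nonpos {p : ℝ} (hp : p ≤ 0) :
    ConvexOn ℝ (Set.Ioi 0) fun x : ℝ => x ^ p := by
  refine ⟨convex_Ioi 0, fun x hx y hy a b ha hb hab => ?_⟩
  have hxy : 0 < a • x + b • y := convex_Ioi (0 : ℝ) hx hy ha hb hab
  have hlog : a • Real.log x + b • Real.log y ≤ Real.log (a • x + b • y) :=
    strictConcaveOn_log_Ioi.concaveOn.2 hx hy ha hb hab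
  simp only [smul_eq_mul] at hxy hlog ⊢
  calc (a * x + b * y) ^ p = Real.exp (p * Real.log (a * x + b * y)) := by
        rw [Real.rpow_def_of_pos hxy, mul_comm]
    _ ≤ Real.exp (a * (p * Real.log x) + b * (p * Real.log y)) :=
        Real.exp_le_exp.2 (by nlinarith)
    _ ≤ a * Real.exp (p * Real.log x) + b * Real.exp (p * Real.log y) := by
        simpa using convexOn_exp.2 (Set.mem_univ (p * Real.log x))
          (Set.mem_univ (p * Real.log y)) ha hb hab
    _ = a * x ^ p + b * y ^ p := by
        rw [Real.rpow_def_of_pos hx, Real.rpow_def_of_pos hy, mul_comm (Real.log x),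
          mul_comm (Real.log y)]

namespace Matrix.IsHermitian

variable {n : Type*} [Fintype n] [DecidableEq n] {A : Matrix n n ℂ}

/-- `|⟨bₖ, x⟩|²` for the eigenvector basis `b` of `A`: the spectral distribution of `A` in the
state `x` puts this mass on the eigenvalue `λₖ`. -/
def spectralWeight (hA : A.IsHermitian) (x : n → ℂ) (k : n) : ℝ :=
  Complex.normSq ((star (hA.eigenvectorUnitary : Matrix n n ℂ) *ᵥ x) k)

lemma dotProduct_cfc_mulVec (hA : A.IsHermitian) (f : ℝ → ℝ) (x : n → ℂ) :
    star x ⬝ᵥ cfc f A *ᵥ x = ∑ k, ((hA.spectralWeight x k * f (hA.eigenvalues k) : ℝ) : ℂ) := by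
  have hstar : star x ᵥ* (hA.eigenvectorUnitary : Matrix n n ℂ) =
      star (star (hA.eigenvectorUnitary : Matrix n n ℂ) *ᵥ x) := by
    rw [star_mulVec, star_eq_conjTranspose, conjTranspose_conjTranspose]
  rw [hA.cfc_eq, Matrix.IsHermitian.cfc, Unitary.conjStarAlgAut_apply, ← mulVec_mulVec,
    ← mulVec_mulVec, dotProduct_mulVec, hstar]
  refine Finset.sum_congr rfl fun k _ => ?_
  simp only [mulVec_diagonal, Pi.star_apply, Function.comp_apply, spectralWeight]
  rw [Complex.ofReal_mul, Complex.normSq_eq_conj_mul_self]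
  simp only [RCLike.star_def, RCLike.ofReal_eq_complex_ofReal]
  ring

lemma re_dotProduct_cfc_mulVec (hA : A.IsHermitian) (f : ℝ → ℝ) (x : n → ℂ) :
    (star x ⬝ᵥ cfc f A *ᵥ x).re = ∑ k, hA.spectralWeight x k * f (hA.eigenvalues k) := by
  rw [hA.dotProduct_cfc_mulVec, ← Complex.ofReal_sum, Complex.ofReal_re]

lemma re_dotProduct_mulVec (hA : A.IsHermitian) (x : n → ℂ) :
    (star x ⬝ᵥ A *ᵥ x).re = ∑ k, hA.spectralWeight x k * hA.eigenvalues k := by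
  simpa [cfc_id' ℝ A hA.isSelfAdjoint] using hA.re_dotProduct_cfc_mulVec (fun t => t) x

lemma sum_spectralWeight (hA : A.IsHermitian) (x : n → ℂ) :
    ∑ k, hA.spectralWeight x k = (star x ⬝ᵥ x).re := by
  simpa [cfc_const_one ℝ A hA.isSelfAdjoint] using
    (hA.re_dotProduct_cfc_mulVec (fun _ => 1) x).symm

lemma spectralWeight_eigenvectorBasis (hA : A.IsHermitian) (i k : n) :
    hA.spectralWeight (hA.eigenvectorBasis i) k = if k = i then 1 else 0 := by
  rw [spectralWeight, star_eigenvectorUnitary_mulVec, Pi.single_apply]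
  split_ifs <;> simp

lemma re_dotProduct_cfc_mulVec_eigenvectorBasis (hA : A.IsHermitian) (f : ℝ → ℝ) (i : n) :
    (star ⇑(hA.eigenvectorBasis i) ⬝ᵥ cfc f A *ᵥ ⇑(hA.eigenvectorBasis i)).re =
      f (hA.eigenvalues i) := by
  simp [re_dotProduct_cfc_mulVec hA, spectralWeight_eigenvectorBasis]

lemma re_star_dotProduct_eigenvectorBasis (hA : A.IsHermitian) (i : n) :
    (star ⇑(hA.eigenvectorBasis i) ⬝ᵥ ⇑(hA.eigenvectorBasis i)).re = 1 := by
  simpa [cfc_const_one ℝ A hA.isSelfAdjoint] using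
    hA.re_dotProduct_cfc_mulVec_eigenvectorBasis (fun _ => 1) i

lemma eigenvectorBasis_ne_zero (hA : A.IsHermitian) (i : n) : ⇑(hA.eigenvectorBasis i) ≠ 0 :=
  fun h => by simpa [h] using hA.re_star_dotProduct_eigenvectorBasis i

lemma trace_eq_sum_dotProduct_eigenvectorBasis (hA : A.IsHermitian) (M : Matrix n n ℂ) :
    M.trace = ∑ i, star ⇑(hA.eigenvectorBasis i) ⬝ᵥ M *ᵥ ⇑(hA.eigenvectorBasis i) := by
  have hconj : M.trace =
      (star (hA.eigenvectorUnitary : Matrix n n ℂ) * M * hA.eigenvectorUnitary).trace := by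
    rw [Matrix.trace_mul_cycle, Unitary.mul_star_self_of_mem hA.eigenvectorUnitary.2, one_mul]
  rw [hconj]
  refine Finset.sum_congr rfl fun i _ => ?_
  simp [dotProduct, mulVec, mul_apply, Finset.mul_sum, mul_assoc]

lemma trace_re_le_of_forall_eigenvalues_le (hA : A.IsHermitian) {B : Matrix n n ℂ} {c : ℝ}
    (h : ∀ i, hA.eigenvalues i ≤
      c * (star ⇑(hA.eigenvectorBasis i) ⬝ᵥ B *ᵥ ⇑(hA.eigenvectorBasis i)).re) :
    A.trace.re ≤ c * B.trace.re := by
  rw [hA.trace_eq_sum_eigenvalues, hA.trace_eq_sum_dotProduct_eigenvectorBasis B, Complex.re_sum,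
    Complex.re_sum, Finset.mul_sum]
  simpa using Finset.sum_le_sum fun i _ => h i

end Matrix.IsHermitian

section

variable {n : Type*} [Fintype n] [DecidableEq n] {A : Matrix n n ℂ}

lemma ConcaveOn.re_dotProduct_cfc_mulVec_le (hA : A.IsHermitian) {f : ℝ → ℝ} {s : Set ℝ}
    (hf : ConcaveOn ℝ s f) (hs : ∀ k, hA.eigenvalues k ∈ s) {x : n → ℂ}
    (hx : (star x ⬝ᵥ x).re = 1) :
    (star x ⬝ᵥ cfc f A *ᵥ x).re ≤ f (star x ⬝ᵥ A *ᵥ x).re := by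
  simp only [hA.re_dotProduct_cfc_mulVec, hA.re_dotProduct_mulVec, ← smul_eq_mul]
  exact hf.le_map_sum (fun k _ => Complex.normSq_nonneg _)
    (by rw [hA.sum_spectralWeight, hx]) (fun k _ => hs k)

lemma ConvexOn.le_re_dotProduct_cfc_mulVec (hA : A.IsHermitian) {f : ℝ → ℝ} {s : Set ℝ}
    (hf : ConvexOn ℝ s f) (hs : ∀ k, hA.eigenvalues k ∈ s) {x : n → ℂ}
    (hx : (star x ⬝ᵥ x).re = 1) :
    f (star x ⬝ᵥ A *ᵥ x).re ≤ (star x ⬝ᵥ cfc f A *ᵥ x).re := by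
  simp only [hA.re_dotProduct_cfc_mulVec, hA.re_dotProduct_mulVec, ← smul_eq_mul]
  exact hf.map_sum_le (fun k _ => Complex.normSq_nonneg _)
    (by rw [hA.sum_spectralWeight, hx]) (fun k _ => hs k)

end

lemma Matrix.PosSemidef.trace_re_nonneg {n : Type*} [Fintype n] {A : Matrix n n ℂ}
    (hA : A.PosSemidef) : 0 ≤ A.trace.re :=
  (Complex.nonneg_iff.1 hA.trace_nonneg).1

lemma Matrix.PosDef.trace_re_pos {n : Type*} [Fintype n] [Nonempty n] {A : Matrix n n ℂ}
    (hA : A.PosDef) : 0 < A.trace.re :=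
  (Complex.pos_iff.1 hA.trace_pos).1

section MatrixPower

variable {d : ℕ} {A B : Matrix (Fin d) (Fin d) ℂ}

lemma mpow_eq_cfc (hA : A.IsHermitian) (r : ℝ) : mpow A r = cfc (fun x : ℝ => x ^ r) A := by
  rw [hA.cfc_eq, mpow, dif_pos hA, Matrix.IsHermitian.cfc]
  rfl

lemma Matrix.PosSemidef.mpow_ofReal_smul (hA : A.PosSemidef) {c : ℝ} (hc : 0 ≤ c) (r : ℝ) :
    mpow ((c : ℂ) • A) r = c ^ r • mpow A r := by
  rw [Complex.coe_smul, mpow_eq_cfc (hA.1.smul (IsSelfAdjoint.all c)), mpow_eq_cfc hA.1,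
    ← cfc_comp_smul c _ A ((finite_real_spectrum.image _).continuousOn _) hA.1.isSelfAdjoint,
    ← cfc_const_mul _ _ A (finite_real_spectrum.continuousOn _)]
  refine cfc_congr fun x hx => ?_
  have hx0 : 0 ≤ x := by
    rw [hA.1.spectrum_real_eq_range_eigenvalues] at hx
    obtain ⟨i, rfl⟩ := hx
    exact hA.eigenvalues_nonneg i
  simp [Real.mul_rpow hc hx0]

lemma Matrix.PosSemidef.mpow_posSemidef (hA : A.PosSemidef) (r : ℝ) : (mpow A r).PosSemidef := by
  refine .of_dotProduct_mulVec_nonneg ?_ fun x => ?_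
  · rw [mpow_eq_cfc hA.1]
    exact cfc_predicate _ A
  · rw [mpow_eq_cfc hA.1, hA.1.dotProduct_cfc_mulVec, ← Complex.ofReal_sum]
    exact_mod_cast Finset.sum_nonneg fun k _ =>
      mul_nonneg (Complex.normSq_nonneg _) (Real.rpow_nonneg (hA.eigenvalues_nonneg k) r)

lemma re_dotProduct_mpow_mulVec_eigenvectorBasis (hA : A.IsHermitian) (r : ℝ) (i : Fin d) :
    (star ⇑(hA.eigenvectorBasis i) ⬝ᵥ mpow A r *ᵥ ⇑(hA.eigenvectorBasis i)).re =
      hA.eigenvalues i ^ r := by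
  rw [mpow_eq_cfc hA]
  exact hA.re_dotProduct_cfc_mulVec_eigenvectorBasis _ i

lemma Matrix.PosSemidef.re_dotProduct_mpow_mulVec_le (hB : B.PosSemidef) {β : ℝ} (hβ0 : 0 ≤ β)
    (hβ1 : β ≤ 1) {x : Fin d → ℂ} (hx : (star x ⬝ᵥ x).re = 1) :
    (star x ⬝ᵥ mpow B β *ᵥ x).re ≤ (star x ⬝ᵥ B *ᵥ x).re ^ β := by
  rw [mpow_eq_cfc hB.1]
  exact (Real.concaveOn_rpow hβ0 hβ1).re_dotProduct_cfc_mulVec_le hB.1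
    (fun k => hB.eigenvalues_nonneg k) hx

lemma Matrix.PosDef.le_re_dotProduct_mpow_mulVec (hB : B.PosDef) {β : ℝ} (hβ : β ≤ 0)
    {x : Fin d → ℂ} (hx : (star x ⬝ᵥ x).re = 1) :
    (star x ⬝ᵥ B *ᵥ x).re ^ β ≤ (star x ⬝ᵥ mpow B β *ᵥ x).re := by
  rw [mpow_eq_cfc hB.1]
  exact (Real.convexOn_rpow_of_nonpos hβ).le_re_dotProduct_cfc_mulVec hB.1
    (fun k => hB.eigenvalues_pos k) hx

end MatrixPower

section Loewner

variable {d : ℕ}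

lemma loewnerLE.trans {A B C : Matrix (Fin d) (Fin d) ℂ} (hAB : loewnerLE A B)
    (hBC : loewnerLE B C) : loewnerLE A C := by
  simpa [loewnerLE] using hBC.add hAB

lemma loewnerLE.smul {A B : Matrix (Fin d) (Fin d) ℂ} (h : loewnerLE A B) {c : ℝ} (hc : 0 ≤ c) :
    loewnerLE (c • A) (c • B) := by
  simpa [loewnerLE, smul_sub] using Matrix.PosSemidef.smul h hc

lemma loewnerLE.re_dotProduct_le {A B : Matrix (Fin d) (Fin d) ℂ} (h : loewnerLE A B)
    (x : Fin d → ℂ) : (star x ⬝ᵥ A *ᵥ x).re ≤ (star x ⬝ᵥ B *ᵥ x).re := by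
  simpa [sub_mulVec, dotProduct_sub] using (Complex.le_def.1 (h.dotProduct_mulVec_nonneg x)).1

/-- `dTmat V U` is the infimum of the `r ≥ 0` with `ThompsonBound r V U`. -/
def ThompsonBound (r : ℝ) (V U : Matrix (Fin d) (Fin d) ℂ) : Prop :=
  loewnerLE (Real.exp (-r) • V) U ∧ loewnerLE U (Real.exp r • V)

lemma ThompsonBound.symm {r : ℝ} {V U : Matrix (Fin d) (Fin d) ℂ} (h : ThompsonBound r V U) :
    ThompsonBound r U V := by
  constructor
  · simpa [smul_smul, ← Real.exp_add] using h.2.smul (Real.exp_pos (-r)).le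
  · simpa [smul_smul, ← Real.exp_add] using h.1.smul (Real.exp_pos r).le

lemma ThompsonBound.trans {r s : ℝ} {A B C : Matrix (Fin d) (Fin d) ℂ}
    (hAB : ThompsonBound r A B) (hBC : ThompsonBound s B C) : ThompsonBound (r + s) A C := by
  constructor
  · have := (hAB.1.smul (Real.exp_pos (-s)).le).trans hBC.1
    rwa [smul_smul, ← Real.exp_add, ← neg_add, add_comm] at this
  · have := hBC.2.trans (hAB.2.smul (Real.exp_pos s).le)
    rwa [smul_smul, ← Real.exp_add, add_comm] at this

lemma thompsonBound_smul_self {M : Matrix (Fin d) (Fin d) ℂ} (hM : M.PosSemidef) {r c : ℝ}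
    (hlo : Real.exp (-r) ≤ c) (hhi : c ≤ Real.exp r) : ThompsonBound r M (c • M) := by
  constructor
  · simpa [loewnerLE, ← sub_smul] using hM.smul (sub_nonneg.2 hlo)
  · simpa [loewnerLE, ← sub_smul] using hM.smul (sub_nonneg.2 hhi)

lemma dTmat_le_mul_of_thompsonBound {V U U' : Matrix (Fin d) (Fin d) ℂ} {c : ℝ} (hc : 0 < c)
    (h : ∀ r, 0 ≤ r → ThompsonBound r V U → ThompsonBound (c * r) V U') :
    dTmat V U' ≤ c * dTmat V U := by
  have hmono : Monotone fun x : EReal => (c : EReal) * x := fun x y hxy =>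
    mul_le_mul_of_nonneg_left hxy (by exact_mod_cast hc.le)
  have hcont : Continuous fun x : EReal => (c : EReal) * x := by
    refine continuous_iff_continuousAt.2 fun x => ?_
    have hc' : (c : EReal) ≠ 0 := by exact_mod_cast hc.ne'
    exact ContinuousAt.comp (f := fun x : EReal => ((c : EReal), x))
      (EReal.continuousAt_mul (.inl hc') (.inl hc') (.inl (EReal.coe_ne_bot c))
        (.inl (EReal.coe_ne_top c))) (continuous_const.prodMk continuous_id).continuousAt
  rw [dTmat, dTmat, hmono.map_sInf_of_continuousAt hcont.continuousAt
    (EReal.coe_mul_top_of_pos hc)]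
  refine sInf_le_sInf ?_
  rintro _ ⟨_, ⟨r, hr, rfl, hb⟩, rfl⟩
  exact ⟨c * r, by positivity, by norm_cast, h r hr hb⟩

end Loewner

section TraceBounds

variable {d : ℕ} {A B : Matrix (Fin d) (Fin d) ℂ}

lemma trace_re_rpow_le_of_loewnerLE_mpow (hA : A.PosDef) (hB : B.PosDef) {β c : ℝ}
    (hβ0 : 0 < β) (hβ1 : β ≤ 1) (hc : 0 < c) (h : loewnerLE (mpow A β) (c • mpow B β)) :
    A.trace.re ^ β ≤ c * B.trace.re ^ β := by
  have htr : A.trace.re ≤ c ^ β⁻¹ * B.trace.re := by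
    refine hA.1.trace_re_le_of_forall_eigenvalues_le fun i => ?_
    have hq : 0 < (star ⇑(hA.1.eigenvectorBasis i) ⬝ᵥ B *ᵥ ⇑(hA.1.eigenvectorBasis i)).re :=
      hB.re_dotProduct_pos (hA.1.eigenvectorBasis_ne_zero i)
    rw [← Real.rpow_le_rpow_iff (hA.eigenvalues_pos i).le (by positivity) hβ0,
      Real.mul_rpow (by positivity) hq.le, Real.rpow_inv_rpow hc.le hβ0.ne',
      ← re_dotProduct_mpow_mulVec_eigenvectorBasis]
    calc _ ≤ c * (star ⇑(hA.1.eigenvectorBasis i) ⬝ᵥ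
            mpow B β *ᵥ ⇑(hA.1.eigenvectorBasis i)).re := by
          simpa [smul_mulVec, dotProduct_smul] using h.re_dotProduct_le _
      _ ≤ _ := mul_le_mul_of_nonneg_left (hB.posSemidef.re_dotProduct_mpow_mulVec_le hβ0.le hβ1
          (hA.1.re_star_dotProduct_eigenvectorBasis i)) hc.le
  calc A.trace.re ^ β ≤ (c ^ β⁻¹ * B.trace.re) ^ β :=
        Real.rpow_le_rpow hA.posSemidef.trace_re_nonneg htr hβ0.le
    _ = c * B.trace.re ^ β := by
        rw [Real.mul_rpow (by positivity) hB.posSemidef.trace_re_nonneg,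
          Real.rpow_inv_rpow hc.le hβ0.ne']

lemma trace_re_rpow_le_of_smul_mpow_loewnerLE [NeZero d] (hA : A.PosDef) (hB : B.PosDef)
    {β c : ℝ} (hβ : β < 0) (hc : 0 < c) (h : loewnerLE (c • mpow B β) (mpow A β)) :
    c * B.trace.re ^ β ≤ A.trace.re ^ β := by
  have htr : A.trace.re ≤ c ^ β⁻¹ * B.trace.re := by
    refine hA.1.trace_re_le_of_forall_eigenvalues_le fun i => ?_
    have hq : 0 < (star ⇑(hA.1.eigenvectorBasis i) ⬝ᵥ B *ᵥ ⇑(hA.1.eigenvectorBasis i)).re :=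
      hB.re_dotProduct_pos (hA.1.eigenvectorBasis_ne_zero i)
    rw [← Real.rpow_le_rpow_iff_of_neg (by positivity) (hA.eigenvalues_pos i) hβ,
      Real.mul_rpow (by positivity) hq.le, Real.rpow_inv_rpow hc.le hβ.ne,
      ← re_dotProduct_mpow_mulVec_eigenvectorBasis]
    calc _ ≤ c * (star ⇑(hA.1.eigenvectorBasis i) ⬝ᵥ
            mpow B β *ᵥ ⇑(hA.1.eigenvectorBasis i)).re :=
          mul_le_mul_of_nonneg_left (hB.le_re_dotProduct_mpow_mulVec hβ.le
            (hA.1.re_star_dotProduct_eigenvectorBasis i)) hc.le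
      _ ≤ _ := by simpa [smul_mulVec, dotProduct_smul] using h.re_dotProduct_le _
  calc c * B.trace.re ^ β = (c ^ β⁻¹ * B.trace.re) ^ β := by
        rw [Real.mul_rpow (by positivity) hB.posSemidef.trace_re_nonneg,
          Real.rpow_inv_rpow hc.le hβ.ne]
    _ ≤ A.trace.re ^ β := Real.rpow_le_rpow_of_nonpos hA.trace_re_pos htr hβ.le

lemma ThompsonBound.trace_re_rpow [NeZero d] {r β : ℝ} (hA : A.PosDef) (hB : B.PosDef)
    (hβ1 : β < 1) (hβ0 : β ≠ 0) (h : ThompsonBound r (mpow B β) (mpow A β)) :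
    Real.exp (-r) * B.trace.re ^ β ≤ A.trace.re ^ β ∧
      A.trace.re ^ β ≤ Real.exp r * B.trace.re ^ β := by
  rcases hβ0.lt_or_gt with hneg | hpos
  · have hBA := trace_re_rpow_le_of_smul_mpow_loewnerLE hB hA hneg (Real.exp_pos _) h.symm.1
    refine ⟨trace_re_rpow_le_of_smul_mpow_loewnerLE hA hB hneg (Real.exp_pos _) h.1, ?_⟩
    calc A.trace.re ^ β = Real.exp r * (Real.exp (-r) * A.trace.re ^ β) := by
          rw [← mul_assoc, ← Real.exp_add, add_neg_cancel, Real.exp_zero, one_mul]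
      _ ≤ Real.exp r * B.trace.re ^ β := mul_le_mul_of_nonneg_left hBA (Real.exp_pos r).le
  · have hBA := trace_re_rpow_le_of_loewnerLE_mpow hB hA hpos hβ1.le (Real.exp_pos _) h.symm.2
    refine ⟨?_, trace_re_rpow_le_of_loewnerLE_mpow hA hB hpos hβ1.le (Real.exp_pos _) h.2⟩
    calc Real.exp (-r) * B.trace.re ^ β ≤ Real.exp (-r) * (Real.exp r * A.trace.re ^ β) :=
          mul_le_mul_of_nonneg_left hBA (Real.exp_pos _).le
      _ = A.trace.re ^ β := by
          rw [← mul_assoc, ← Real.exp_add, neg_add_cancel, Real.exp_zero, one_mul]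

end TraceBounds

/-- the Thompson metric is preserved under trace-normalization up to a
factor `2`: `d_T(V^(1-α), (U/Tr[U])^(1-α)) ≤ 2 d_T(V^(1-α), U^(1-α))`. -/
theorem thompson_normalization_stable {d : ℕ} (α : ℝ)
    (hα : α ∈ Set.Ioo (0 : ℝ) 1 ∪ Set.Ioi (1 : ℝ))
    (U V : Matrix (Fin d) (Fin d) ℂ) (hU : U.PosDef) (hV : V.PosDef)
    (hV1 : V.trace = 1) :
    dTmat (mpow V (1 - α)) (mpow ((U.trace)⁻¹ • U) (1 - α)) ≤
      ((2 : ℝ) : EReal) * dTmat (mpow V (1 - α)) (mpow U (1 - α)) := by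
  set β := 1 - α
  obtain ⟨hβ1, hβ0⟩ : β < 1 ∧ β ≠ 0 := by
    rcases hα with ⟨hα0, hα1⟩ | (hα1 : 1 < α)
    · exact ⟨by linarith, sub_ne_zero.2 hα1.ne'⟩
    · exact ⟨by linarith, sub_ne_zero.2 hα1.ne⟩
  have : NeZero d := ⟨by rintro rfl; simp at hV1⟩
  obtain ⟨s, hs, hsU⟩ : ∃ s : ℝ, 0 < s ∧ (s : ℂ) = U.trace :=
    RCLike.pos_iff_exists_ofReal.1 hU.trace_pos
  rw [← hsU, ← Complex.ofReal_inv, hU.posSemidef.mpow_ofReal_smul (inv_nonneg.2 hs.le)]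
  refine dTmat_le_mul_of_thompsonBound two_pos fun r _ hr => ?_
  obtain ⟨hlo, hhi⟩ := hr.trace_re_rpow hU hV hβ1 hβ0
  rw [hV1, ← hsU] at hlo hhi
  simp only [Complex.one_re, Complex.ofReal_re, Real.one_rpow, mul_one] at hlo hhi
  rw [two_mul]
  refine hr.trans (thompsonBound_smul_self (hU.posSemidef.mpow_posSemidef β) ?_ ?_)
  · rw [Real.inv_rpow hs.le, Real.exp_neg]
    exact inv_anti₀ (by positivity) hhi
  · rw [Real.inv_rpow hs.le, ← neg_neg r, Real.exp_neg (-r)]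
    exact inv_anti₀ (by positivity) hlo

end
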